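/- arXiv:2401.06648 — 6 statements merged into one kernel-verified Lean document; each statement's English description precedes it below -/
import Mathlib

section
/- Let a ≤ b be real numbers, let C ≥ 0, and let g : ℝ → ℝ be twice differentiable on [a,b] with |g''(x)| ≤ C for all x ∈ [a,b]. Let M ≥ 1 and let p_0, p_1, …, p_M be real numbers with p_0 = a, p_M = b, p_i ≤ p_{i+1} for all i, and p_{i+1} − p_i ≤ d for all i. Then for every x ∈ [a,b], (min_{0 ≤ i ≤ M} g(p_i)) − C·d²/2 ≤ g(x) ≤ (max_{0 ≤ i ≤ M} g(p_i)) + C·d²/2. -/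
/-!
On an interval `[u, v]` the function `ψ x = g x + C/2 · (x - u)(x - v)` has `ψ'' = g'' + C ≥ 0`,
so it is convex and lies below `max (ψ u) (ψ v) = max (g u) (g v)`. Hence
`g x ≤ max (g u) (g v) + C/2 · (x - u)(v - x)`, and the correction is at most `C d²/2` when
`[u, v]` is a cell of the sampling grid containing `x`. The lower envelope is the upper one for `-g`.
-/

open Set

theorem Fin.exists_castSucc_le_and_le_succ {α : Type*} [LinearOrder α] {n : ℕ} (hn : n ≠ 0)
    (p : Fin (n + 1) → α) {x : α} (h0 : p 0 ≤ x) (hlast : x ≤ p (Fin.last n)) :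
    ∃ i : Fin n, p i.castSucc ≤ x ∧ x ≤ p i.succ := by
  have hlast' : x ≤ p (⟨n - 1, by omega⟩ : Fin n).succ := by
    convert hlast using 2
    ext
    simp only [Fin.val_succ, Fin.val_last]
    omega
  -- the first cell whose right endpoint reaches `x`; no monotonicity of `p` is needed
  obtain ⟨i, hi, hmin⟩ :=
    (wellFounded_lt (α := Fin n)).has_min {i | x ≤ p i.succ} ⟨_, hlast'⟩
  refine ⟨i, ?_, hi⟩
  rcases Fin.eq_zero_or_eq_succ i.castSucc with hzero | ⟨j, hj⟩
  · rwa [hzero]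
  · have hji : j < i := by
      have := congrArg Fin.val hj
      simp only [Fin.val_castSucc, Fin.val_succ] at this
      exact Fin.lt_def.2 (by omega)
    rw [hj]
    exact (not_le.mp (hmin j · hji)).le

section SecondDerivativeBound

variable {D : Set ℝ} {g g' g'' : ℝ → ℝ} {C u v x : ℝ}

theorem convexOn_add_mul_sub_mul_sub_of_neg_le_deriv2 (hD : Convex ℝ D)
    (hg' : ∀ y ∈ D, HasDerivWithinAt g (g' y) D y)
    (hg'' : ∀ y ∈ D, HasDerivWithinAt g' (g'' y) D y) (hC : ∀ y ∈ D, -C ≤ g'' y) (u v : ℝ) :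
    ConvexOn ℝ D (fun y => g y + C / 2 * ((y - u) * (y - v))) := by
  have hquad' (y : ℝ) : HasDerivAt (fun y => C / 2 * ((y - u) * (y - v)))
      (C / 2 * (2 * y - u - v)) y := by
    exact ((((hasDerivAt_id' y).sub_const u).mul ((hasDerivAt_id' y).sub_const v)).const_mul
      (C / 2)).congr_deriv (by ring)
  have hquad'' (y : ℝ) : HasDerivAt (fun y => C / 2 * (2 * y - u - v)) C y := by
    exact ((((hasDerivAt_id' y).const_mul 2).sub_const u).sub_const v).const_mul (C / 2)
      |>.congr_deriv (by ring)
  refine convexOn_of_hasDerivWithinAt2_nonneg (f' := fun y => g' y + C / 2 * (2 * y - u - v))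
    (f'' := fun y => g'' y + C) hD
    (fun y hy => (hg' y hy).continuousWithinAt.add (hquad' y).continuousAt.continuousWithinAt)
    (fun y hy => ?_) (fun y hy => ?_) (fun y hy => by linarith [hC y (interior_subset hy)])
  · exact ((hg' y (interior_subset hy)).mono interior_subset).add (hquad' y).hasDerivWithinAt
  · exact ((hg'' y (interior_subset hy)).mono interior_subset).add (hquad'' y).hasDerivWithinAt

theorem le_max_add_of_neg_le_deriv2 (hD : Convex ℝ D)
    (hg' : ∀ y ∈ D, HasDerivWithinAt g (g' y) D y)
    (hg'' : ∀ y ∈ D, HasDerivWithinAt g' (g'' y) D y) (hC : ∀ y ∈ D, -C ≤ g'' y)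
    (hu : u ∈ D) (hv : v ∈ D) (hx : x ∈ Icc u v) :
    g x ≤ max (g u) (g v) + C / 2 * ((x - u) * (v - x)) := by
  have hψ := (convexOn_add_mul_sub_mul_sub_of_neg_le_deriv2 hD hg' hg'' hC u v).le_on_segment
    hu hv (segment_eq_Icc (hx.1.trans hx.2) ▸ hx)
  simp only [sub_self, zero_mul, mul_zero, add_zero] at hψ
  linarith

theorem min_sub_le_of_deriv2_le (hD : Convex ℝ D)
    (hg' : ∀ y ∈ D, HasDerivWithinAt g (g' y) D y)
    (hg'' : ∀ y ∈ D, HasDerivWithinAt g' (g'' y) D y) (hC : ∀ y ∈ D, g'' y ≤ C)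
    (hu : u ∈ D) (hv : v ∈ D) (hx : x ∈ Icc u v) :
    min (g u) (g v) - C / 2 * ((x - u) * (v - x)) ≤ g x := by
  have := le_max_add_of_neg_le_deriv2 (g := -g) hD (fun y hy => (hg' y hy).neg)
    (fun y hy => (hg'' y hy).neg) (fun y hy => neg_le_neg (hC y hy)) hu hv hx
  simp only [Pi.neg_apply, max_neg_neg] at this
  linarith

end SecondDerivativeBound

theorem stmt_0_general (a b C d : ℝ) (hC : 0 ≤ C)
    (g g' g'' : ℝ → ℝ)
    (hg' : ∀ x ∈ Set.Icc a b, HasDerivWithinAt g (g' x) (Set.Icc a b) x)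
    (hg'' : ∀ x ∈ Set.Icc a b, HasDerivWithinAt g' (g'' x) (Set.Icc a b) x)
    (hbound : ∀ x ∈ Set.Icc a b, |g'' x| ≤ C)
    (M : ℕ) (hM : 1 ≤ M) (p : Fin (M + 1) → ℝ)
    (hp0 : p 0 = a) (hpM : p (Fin.last M) = b)
    (hmono : ∀ i : Fin M, p i.castSucc ≤ p i.succ)
    (hgap : ∀ i : Fin M, p i.succ - p i.castSucc ≤ d) :
    ∀ x ∈ Set.Icc a b,
      (Finset.univ.inf' Finset.univ_nonempty (fun i : Fin (M + 1) => g (p i)))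
          - C * d ^ 2 / 2 ≤ g x ∧
      g x ≤ (Finset.univ.sup' Finset.univ_nonempty (fun i : Fin (M + 1) => g (p i)))
          + C * d ^ 2 / 2 := by
  intro x hx
  have hmon : Monotone p := Fin.monotone_iff_le_succ.mpr hmono
  have hmem (i : Fin (M + 1)) : p i ∈ Icc a b :=
    ⟨hp0 ▸ hmon (Fin.zero_le i), hpM ▸ hmon (Fin.le_last i)⟩
  obtain ⟨i, hlo, hhi⟩ :=
    Fin.exists_castSucc_le_and_le_succ (by omega) p (hp0 ▸ hx.1) (hpM ▸ hx.2)
  have hcorr : C / 2 * ((x - p i.castSucc) * (p i.succ - x)) ≤ C * d ^ 2 / 2 := by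
    have hsq : (x - p i.castSucc) * (p i.succ - x) ≤ d ^ 2 := by
      nlinarith [hgap i]
    nlinarith
  have hC' (y : ℝ) (hy : y ∈ Icc a b) := abs_le.mp (hbound y hy)
  constructor
  · have hmin := min_sub_le_of_deriv2_le (convex_Icc a b) hg' hg'' (fun y hy => (hC' y hy).2)
      (hmem _) (hmem _) ⟨hlo, hhi⟩
    have := le_min (Finset.inf'_le (fun j => g (p j)) (Finset.mem_univ i.castSucc))
      (Finset.inf'_le (fun j => g (p j)) (Finset.mem_univ i.succ))
    linarith
  · have hmax := le_max_add_of_neg_le_deriv2 (convex_Icc a b) hg' hg'' (fun y hy => (hC' y hy).1)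
      (hmem _) (hmem _) ⟨hlo, hhi⟩
    have := max_le (Finset.le_sup' (fun j => g (p j)) (Finset.mem_univ i.castSucc))
      (Finset.le_sup' (fun j => g (p j)) (Finset.mem_univ i.succ))
    linarith

/-- Core of the paper's Theorem 1 (RESAFE/COL safety envelope): a twice-differentiable
function on `[a,b]` with `|g''| ≤ C` is enclosed between the min and max of its values
at sample points `p 0 = a ≤ p 1 ≤ ⋯ ≤ p M = b` with consecutive gaps at most `d`,
enlarged by `C·d²/2`. -/
theorem stmt_0 (a b C d : ℝ) (hab : a ≤ b) (hC : 0 ≤ C)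
    (g g' g'' : ℝ → ℝ)
    (hg' : ∀ x ∈ Set.Icc a b, HasDerivWithinAt g (g' x) (Set.Icc a b) x)
    (hg'' : ∀ x ∈ Set.Icc a b, HasDerivWithinAt g' (g'' x) (Set.Icc a b) x)
    (hbound : ∀ x ∈ Set.Icc a b, |g'' x| ≤ C)
    (M : ℕ) (hM : 1 ≤ M) (p : Fin (M + 1) → ℝ)
    (hp0 : p 0 = a) (hpM : p (Fin.last M) = b)
    (hmono : ∀ i : Fin M, p i.castSucc ≤ p i.succ)
    (hgap : ∀ i : Fin M, p i.succ - p i.castSucc ≤ d) :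
    ∀ x ∈ Set.Icc a b,
      (Finset.univ.inf' Finset.univ_nonempty (fun i : Fin (M + 1) => g (p i)))
          - C * d ^ 2 / 2 ≤ g x ∧
      g x ≤ (Finset.univ.sup' Finset.univ_nonempty (fun i : Fin (M + 1) => g (p i)))
          + C * d ^ 2 / 2 :=
  stmt_0_general a b C d hC g g' g'' hg' hg'' hbound M hM p hp0 hpM hmono hgap
end

section
/- Let a ≤ b be real numbers, let C ≥ 0, and let g : ℝ → ℝ be twice differentiable on [a,b] with |g''(x)| ≤ C for all x ∈ [a,b]. For every integer m ≥ 1, let p_i = a + i·(b−a)/m for i = 0, …, m be the uniform grid on [a,b]. Then 0 ≤ (sup_{x ∈ [a,b]} g(x)) − (max_{0 ≤ i ≤ m} g(p_i)) ≤ C·(b−a)²/(2m²). In particular, the error of the regional extrema approximation decreases proportionally to 1/m² as the number of regions m increases. -/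
/-!
Let `x` be a maximiser of `g` on `[a, b]`. If `x` is an endpoint, it is a grid point and the error
vanishes. Otherwise `g' x = 0`, so `|g'| ≤ C |y - x|` near `x` and hence `g x - g p ≤ C (p - x)²`
for every `p`; the nearest grid point is within `(b - a) / (2m)` of `x`.
-/

open Set

lemma abs_sub_le_mul_sq_of_deriv_eq_zero {s : Set ℝ} (hs : Convex ℝ s) {g g' g'' : ℝ → ℝ}
    {C x p : ℝ} (hg' : ∀ y ∈ s, HasDerivWithinAt g (g' y) s y)
    (hg'' : ∀ y ∈ s, HasDerivWithinAt g' (g'' y) s y) (hbound : ∀ y ∈ s, |g'' y| ≤ C)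
    (hx : x ∈ s) (hp : p ∈ s) (hx0 : g' x = 0) :
    |g p - g x| ≤ C * (p - x) ^ 2 := by
  have hC : 0 ≤ C := (abs_nonneg _).trans (hbound x hx)
  have hsub : uIcc x p ⊆ s := hs.ordConnected.uIcc_subset hx hp
  have hg'_le : ∀ y ∈ uIcc x p, ‖g' y‖ ≤ C * |p - x| := fun y hy =>
    calc ‖g' y‖ = ‖g' y - g' x‖ := by rw [hx0, sub_zero]
      _ ≤ C * ‖y - x‖ := hs.norm_image_sub_le_of_norm_hasDerivWithin_le hg'' hbound hx (hsub hy)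
      _ ≤ C * |p - x| := by gcongr; exact abs_sub_left_of_mem_uIcc hy
  calc |g p - g x|
      ≤ C * |p - x| * ‖p - x‖ :=
        (convex_uIcc x p).norm_image_sub_le_of_norm_hasDerivWithin_le
          (fun y hy => (hg' y (hsub hy)).mono hsub) hg'_le left_mem_uIcc right_mem_uIcc
    _ = C * (p - x) ^ 2 := by rw [Real.norm_eq_abs, mul_assoc, ← sq, sq_abs]

section UniformGrid

variable {a b : ℝ} {m : ℕ}

noncomputable def uniformGrid (a b : ℝ) (m i : ℕ) : ℝ := a + i * (b - a) / m

lemma uniformGrid_zero : uniformGrid a b m 0 = a := by simp [uniformGrid]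

lemma uniformGrid_self (hm : m ≠ 0) : uniformGrid a b m m = b := by
  have : (m : ℝ) ≠ 0 := Nat.cast_ne_zero.2 hm
  rw [uniformGrid, mul_div_cancel_left₀ _ this, add_sub_cancel]

lemma uniformGrid_mem_Icc (hab : a ≤ b) {i : ℕ} (hi : i ≤ m) : uniformGrid a b m i ∈ Icc a b := by
  have hfrac : (i : ℝ) / m ∈ Icc (0 : ℝ) 1 :=
    ⟨by positivity, div_le_one_of_le₀ (by exact_mod_cast hi) (Nat.cast_nonneg m)⟩
  have hstep : uniformGrid a b m i = a + (i / m : ℝ) * (b - a) := by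
    rw [uniformGrid, div_mul_eq_mul_div]
  rw [hstep]
  constructor <;> nlinarith [hfrac.1, hfrac.2]

lemma exists_abs_sub_uniformGrid_le (hab : a ≤ b) (hm : m ≠ 0) {x : ℝ} (hx : x ∈ Icc a b) :
    ∃ i ≤ m, |x - uniformGrid a b m i| ≤ (b - a) / (2 * m) := by
  rcases hab.eq_or_lt with rfl | hab
  · refine ⟨0, Nat.zero_le _, ?_⟩
    simp [uniformGrid_zero, le_antisymm hx.2 hx.1]
  have hm' : (0 : ℝ) < m := by positivity
  have hba : 0 < b - a := sub_pos.2 hab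
  -- `r` is the position of `x` measured in grid steps.
  set r := (x - a) * m / (b - a) with hr
  have hr0 : 0 ≤ r := by have := hx.1; positivity
  have hrm : r ≤ m := by rw [hr, div_le_iff₀ hba]; nlinarith [hx.2]
  refine ⟨⌊r + 1 / 2⌋₊, ?_, ?_⟩
  · exact Nat.lt_succ_iff.1 <| (Nat.floor_lt (by positivity)).2 (by push_cast; linarith)
  · have hround : |r - ⌊r + 1 / 2⌋₊| ≤ 1 / 2 := by
      have := Nat.floor_le (show 0 ≤ r + 1 / 2 by positivity)
      have := Nat.lt_floor_add_one (r + 1 / 2)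
      rw [abs_le]; constructor <;> linarith
    have hdist : x - uniformGrid a b m ⌊r + 1 / 2⌋₊ = (r - ⌊r + 1 / 2⌋₊) * ((b - a) / m) := by
      rw [uniformGrid, hr]; field_simp; ring
    rw [hdist, abs_mul, abs_of_pos (by positivity : 0 < (b - a) / m)]
    calc |r - ⌊r + 1 / 2⌋₊| * ((b - a) / m) ≤ 1 / 2 * ((b - a) / m) := by gcongr
      _ = (b - a) / (2 * m) := by field_simp

end UniformGrid

lemma exists_uniformGrid_sub_le_of_isMaxOn {a b C x : ℝ} {m : ℕ} {g g' g'' : ℝ → ℝ}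
    (hab : a ≤ b) (hm : m ≠ 0)
    (hg' : ∀ y ∈ Icc a b, HasDerivWithinAt g (g' y) (Icc a b) y)
    (hg'' : ∀ y ∈ Icc a b, HasDerivWithinAt g' (g'' y) (Icc a b) y)
    (hbound : ∀ y ∈ Icc a b, |g'' y| ≤ C) (hx : x ∈ Icc a b) (hmax : IsMaxOn g (Icc a b) x) :
    ∃ i ≤ m, g x - g (uniformGrid a b m i) ≤ C * ((b - a) / (2 * m)) ^ 2 := by
  have hC : 0 ≤ C := (abs_nonneg _).trans (hbound x hx)
  rcases hx.1.eq_or_lt with rfl | hax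
  · exact ⟨0, Nat.zero_le _, by rw [uniformGrid_zero, sub_self]; positivity⟩
  rcases hx.2.eq_or_lt with rfl | hxb
  · exact ⟨m, le_rfl, by rw [uniformGrid_self hm, sub_self]; positivity⟩
  have hnhds : Icc a b ∈ nhds x := Icc_mem_nhds hax hxb
  have hx0 : g' x = 0 :=
    (hmax.isLocalMax hnhds).hasDerivAt_eq_zero ((hg' x hx).hasDerivAt hnhds)
  obtain ⟨i, hi, hclose⟩ := exists_abs_sub_uniformGrid_le hab hm hx
  refine ⟨i, hi, ?_⟩
  calc g x - g (uniformGrid a b m i)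
      ≤ |g (uniformGrid a b m i) - g x| := by rw [abs_sub_comm]; exact le_abs_self _
    _ ≤ C * (uniformGrid a b m i - x) ^ 2 :=
        abs_sub_le_mul_sq_of_deriv_eq_zero (convex_Icc a b) hg' hg'' hbound hx
          (uniformGrid_mem_Icc hab hi) hx0
    _ ≤ C * ((b - a) / (2 * m)) ^ 2 := by
        rw [← sq_abs, abs_sub_comm]; gcongr

/-- Paper's Proposition 1: the error of the regional extrema approximation on a uniform
grid of `m+1` points over `[a,b]`, for a twice-differentiable `g` with `|g''| ≤ C`,
is between `0` and `C·(b−a)²/(2m²)`. -/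
theorem stmt_2 (a b C : ℝ) (hab : a ≤ b) (hC : 0 ≤ C)
    (g g' g'' : ℝ → ℝ)
    (hg' : ∀ x ∈ Set.Icc a b, HasDerivWithinAt g (g' x) (Set.Icc a b) x)
    (hg'' : ∀ x ∈ Set.Icc a b, HasDerivWithinAt g' (g'' x) (Set.Icc a b) x)
    (hbound : ∀ x ∈ Set.Icc a b, |g'' x| ≤ C)
    (m : ℕ) (hm : 1 ≤ m) :
    0 ≤ sSup (g '' Set.Icc a b)
        - Finset.univ.sup' Finset.univ_nonempty
            (fun i : Fin (m + 1) => g (a + (i : ℕ) * (b - a) / m)) ∧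
    sSup (g '' Set.Icc a b)
        - Finset.univ.sup' Finset.univ_nonempty
            (fun i : Fin (m + 1) => g (a + (i : ℕ) * (b - a) / m))
      ≤ C * (b - a) ^ 2 / (2 * (m : ℝ) ^ 2) := by
  change 0 ≤ _ - Finset.univ.sup' _ (fun i : Fin (m + 1) => g (uniformGrid a b m i)) ∧
    _ - Finset.univ.sup' _ (fun i : Fin (m + 1) => g (uniformGrid a b m i)) ≤ _
  have hm0 : m ≠ 0 := Nat.one_le_iff_ne_zero.1 hm
  obtain ⟨x, hx, hsup, hmax⟩ := isCompact_Icc.exists_sSup_image_eq_and_ge (nonempty_Icc.2 hab)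
    (fun y hy => (hg' y hy).continuousWithinAt)
  rw [hsup]
  obtain ⟨i, hi, herr⟩ := exists_uniformGrid_sub_le_of_isMaxOn hab hm0 hg' hg'' hbound hx
    (isMaxOn_iff.2 hmax)
  have hle_sup : g (uniformGrid a b m i) ≤ Finset.univ.sup' Finset.univ_nonempty
      (fun i : Fin (m + 1) => g (uniformGrid a b m i)) :=
    Finset.le_sup' (fun j : Fin (m + 1) => g (uniformGrid a b m j))
      (Finset.mem_univ ⟨i, Nat.lt_succ_of_le hi⟩)
  have hsup_le : Finset.univ.sup' Finset.univ_nonempty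
      (fun i : Fin (m + 1) => g (uniformGrid a b m i)) ≤ g x :=
    Finset.sup'_le _ _ fun j _ => hmax _ (uniformGrid_mem_Icc hab (Nat.lt_succ_iff.1 j.isLt))
  have hbound_weaken : C * ((b - a) / (2 * m)) ^ 2 ≤ C * (b - a) ^ 2 / (2 * (m : ℝ) ^ 2) := by
    rw [div_pow, mul_div_assoc]
    gcongr
    nlinarith
  constructor <;> linarith
end

section
/- Let M : ℕ and let a_0, …, a_M be real numbers, and define b_j = Σ_{k=0}^{j} a_k · C(j,k)/C(M,k) for j = 0, …, M, where C(n,k) denotes the binomial coefficient. Then, as polynomials over ℝ, Σ_{k=0}^{M} a_k X^k = Σ_{j=0}^{M} b_j · B_{M,j}(X), where B_{M,j}(X) = C(M,j) X^j (1−X)^{M−j} is the Bernstein basis polynomial of degree M and index j. -/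
/-!
Against the Bernstein basis, `∑ⱼ C(j,k) B_{M,j} = C(M,k) Xᵏ`: the identity
`C(M,j) C(j,k) = C(M,k) C(M-k,j-k)` pulls out `C(M,k) Xᵏ` and leaves the partition of unity
`∑ᵢ B_{M-k,i} = 1`. Substituting the definition of `bⱼ` and exchanging the two sums then
turns `∑ⱼ bⱼ B_{M,j}` into `∑ₖ aₖ Xᵏ`.
-/

open Polynomial Finset

namespace bernsteinPolynomial

variable {R : Type*} [CommRing R]

theorem choose_mul_add (n k i : ℕ) :
    ((k + i).choose k : R[X]) * bernsteinPolynomial R n (k + i)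
      = (n.choose k : R[X]) * X ^ k * bernsteinPolynomial R (n - k) i := by
  have hchoose : (n.choose (k + i) * (k + i).choose k : R[X])
      = n.choose k * (n - k).choose i := by
    have := Nat.choose_mul (n := n) (Nat.le_add_right k i)
    rw [Nat.add_sub_cancel_left] at this
    rw [← Nat.cast_mul, ← Nat.cast_mul, this]
  rw [bernsteinPolynomial, bernsteinPolynomial, ← Nat.sub_sub, pow_add]
  linear_combination (X ^ k * X ^ i * (1 - X) ^ (n - k - i)) * hchoose

theorem sum_choose_mul (n k : ℕ) :
    ∑ j ∈ range (n + 1), (j.choose k : R[X]) * bernsteinPolynomial R n j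
      = (n.choose k : R[X]) * X ^ k := by
  have vanish : ∀ j < k, (j.choose k : R[X]) * bernsteinPolynomial R n j = 0 := fun j hj => by
    rw [Nat.choose_eq_zero_of_lt hj, Nat.cast_zero, zero_mul]
  rcases lt_or_ge n k with hnk | hkn
  · rw [Nat.choose_eq_zero_of_lt hnk, Nat.cast_zero, zero_mul]
    exact sum_eq_zero fun j hj => vanish j (by rw [mem_range] at hj; omega)
  · rw [show n + 1 = k + (n - k + 1) by omega, sum_range_add,
      sum_eq_zero fun j hj => vanish j (mem_range.mp hj)]
    simp only [zero_add, choose_mul_add, ← mul_sum, bernsteinPolynomial.sum, mul_one]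

end bernsteinPolynomial

/-- Paper's equation (6) (Cargo–Shisha): with `bⱼ = Σ_{k≤j} aₖ·C(j,k)/C(M,k)`, the
polynomial `Σ aₖ Xᵏ` equals `Σ bⱼ·B_{M,j}(X)` in the Bernstein basis. -/
theorem stmt_6 (M : ℕ) (a b : ℕ → ℝ)
    (hb : ∀ j ≤ M, b j = ∑ k ∈ Finset.range (j + 1),
      a k * ((j.choose k : ℝ) / (M.choose k : ℝ))) :
    ∑ k ∈ Finset.range (M + 1), C (a k) * X ^ k
      = ∑ j ∈ Finset.range (M + 1), C (b j) * bernsteinPolynomial ℝ M j := by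
  have hb_full : ∀ j ∈ range (M + 1),
      b j = ∑ k ∈ range (M + 1), a k / M.choose k * j.choose k := by
    intro j hj
    rw [hb j (Nat.lt_succ_iff.mp (mem_range.mp hj))]
    refine sum_subset (range_subset_range.mpr (by simpa using hj)) (fun k _ hk => ?_)
      |>.trans (sum_congr rfl fun k _ => by ring)
    rw [Nat.choose_eq_zero_of_lt (by simpa using hk)]
    simp
  symm
  calc ∑ j ∈ range (M + 1), C (b j) * bernsteinPolynomial ℝ M j
      = ∑ k ∈ range (M + 1), C (a k / M.choose k) *
          ∑ j ∈ range (M + 1), (j.choose k : ℝ[X]) * bernsteinPolynomial ℝ M j := by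
        simp_rw [mul_sum]
        rw [sum_comm]
        refine sum_congr rfl fun j hj => ?_
        rw [hb_full j hj, map_sum, sum_mul]
        refine sum_congr rfl fun k _ => ?_
        rw [map_mul, map_natCast, mul_assoc]
    _ = ∑ k ∈ range (M + 1), C (a k) * X ^ k := by
        refine sum_congr rfl fun k hk => ?_
        have hchoose : (M.choose k : ℝ) ≠ 0 :=
          Nat.cast_ne_zero.mpr (Nat.choose_pos (Nat.lt_succ_iff.mp (mem_range.mp hk))).ne'
        rw [bernsteinPolynomial.sum_choose_mul, ← mul_assoc, ← map_natCast C, ← map_mul,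
          div_mul_cancel₀ _ hchoose]
end

section
/- Let M : ℕ and let P be a real polynomial of degree at most M with Bernstein coefficients b_0, …, b_M on [0,1] (i.e. P = Σ_{j=0}^{M} b_j B_{M,j}). Let 0 ≤ c < d ≤ 1 and let b'_0, …, b'_M be the Bernstein coefficients of P on the subinterval [c,d], i.e. the Bernstein coefficients on [0,1] of the polynomial Q(t) = P(c + (d−c)t). Then for every j, min_{0 ≤ i ≤ M} b_i ≤ b'_j ≤ max_{0 ≤ i ≤ M} b_i. -/
/-!
Write `u = c + (e - c) X`. Since `u = e X + c (1 - X)` and `1 - u = (1 - e) X + (1 - c) (1 - X)`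
are nonnegative combinations of `X` and `1 - X`, and multiplying by `X` or by `1 - X` turns a
nonnegative combination of the degree-`n` Bernstein polynomials into one of degree `n + 1`,
every `B_{M,i} ∘ u` has nonnegative Bernstein coefficients. Hence precomposition with `u`
preserves nonnegativity of Bernstein coefficients. As the Bernstein polynomials sum to `1` and
are linearly independent, applying this to `P - min b` and `max b - P` gives the two bounds.
-/

open Polynomial

namespace bernsteinPolynomial

variable {R : Type*} [CommRing R]

/-- The `ν`-th derivative at `0` vanishes on `B_{n,k}` for `k > ν` and not on `B_{n,ν}`, so the
coefficients can be peeled off one by one. -/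
theorem eq_zero_of_sum_C_mul_eq_zero [IsDomain R] [CharZero R] {n : ℕ} {g : ℕ → R}
    (h : ∑ ν ∈ Finset.range (n + 1), C (g ν) * bernsteinPolynomial R n ν = 0) :
    ∀ ν ≤ n, g ν = 0 := by
  intro ν
  induction ν using Nat.strong_induction_on with
  | _ ν ih =>
  intro hν
  have h0 := congrArg (fun p => (derivative^[ν] p).eval 0) h
  simp only [iterate_derivative_sum, iterate_derivative_C_mul, eval_finsetSum, eval_mul,
    eval_C, iterate_derivative_zero, eval_zero] at h0
  rw [Finset.sum_eq_single ν] at h0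
  · exact (mul_eq_zero.mp h0).resolve_right (iterate_derivative_at_0_ne_zero R n ν hν)
  · intro k _ hkν
    rcases hkν.lt_or_gt with hlt | hgt
    · rw [ih k hlt (by omega), zero_mul]
    · rw [iterate_derivative_at_0_eq_zero_of_lt R n hgt, mul_zero]
  · simp only [Finset.mem_range]
    omega

theorem sum_C_mul_inj [IsDomain R] [CharZero R] {n : ℕ} {f g : ℕ → R}
    (h : ∑ ν ∈ Finset.range (n + 1), C (f ν) * bernsteinPolynomial R n ν
      = ∑ ν ∈ Finset.range (n + 1), C (g ν) * bernsteinPolynomial R n ν) :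
    ∀ ν ≤ n, f ν = g ν := by
  refine fun ν hν => sub_eq_zero.mp (eq_zero_of_sum_C_mul_eq_zero (g := fun ν => f ν - g ν) ?_ ν hν)
  simp only [C_sub, sub_mul, Finset.sum_sub_distrib, h, sub_self]

theorem sum_C_sub_mul (n : ℕ) (f : ℕ → R) (r : R) :
    ∑ ν ∈ Finset.range (n + 1), C (f ν - r) * bernsteinPolynomial R n ν
      = ∑ ν ∈ Finset.range (n + 1), C (f ν) * bernsteinPolynomial R n ν - C r := by
  simp only [C_sub, sub_mul, Finset.sum_sub_distrib, ← Finset.mul_sum, bernsteinPolynomial.sum,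
    mul_one]

theorem X_mul (n ν : ℕ) :
    ((n + 1 : ℕ) : R[X]) * (X * bernsteinPolynomial R n ν)
      = ((ν + 1 : ℕ) : R[X]) * bernsteinPolynomial R (n + 1) (ν + 1) := by
  have hchoose : ((n + 1 : ℕ) : R[X]) * (n.choose ν : R[X])
      = ((ν + 1 : ℕ) : R[X]) * ((n + 1).choose (ν + 1) : R[X]) := by
    rw [← Nat.cast_mul, ← Nat.cast_mul, Nat.add_one_mul_choose_eq, mul_comm]
  simp only [bernsteinPolynomial, Nat.add_sub_add_right]
  linear_combination (X ^ (ν + 1) * (1 - X) ^ (n - ν)) * hchoose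

theorem one_sub_X_mul {n ν : ℕ} (h : ν ≤ n) :
    ((n + 1 : ℕ) : R[X]) * ((1 - X) * bernsteinPolynomial R n ν)
      = ((n + 1 - ν : ℕ) : R[X]) * bernsteinPolynomial R (n + 1) ν := by
  have hchoose : ((n + 1 : ℕ) : R[X]) * (n.choose ν : R[X])
      = ((n + 1 - ν : ℕ) : R[X]) * ((n + 1).choose ν : R[X]) := by
    rw [← Nat.cast_mul, ← Nat.cast_mul, mul_comm, Nat.choose_mul_succ_eq, mul_comm]
  simp only [bernsteinPolynomial]
  rw [show n + 1 - ν = n - ν + 1 by omega, pow_succ] at *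
  linear_combination (X ^ ν * (1 - X) ^ (n - ν + 1)) * hchoose

end bernsteinPolynomial

noncomputable def bernsteinCone (n : ℕ) : PointedCone ℝ ℝ[X] :=
  PointedCone.hull ℝ (Set.range fun ν : Fin (n + 1) => bernsteinPolynomial ℝ n ν)

namespace bernsteinCone

theorem bernsteinPolynomial_mem {n ν : ℕ} (h : ν ≤ n) :
    bernsteinPolynomial ℝ n ν ∈ bernsteinCone n :=
  PointedCone.subset_hull ⟨⟨ν, Nat.lt_succ_of_le h⟩, rfl⟩

theorem mem_iff {n : ℕ} {p : ℝ[X]} :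
    p ∈ bernsteinCone n ↔ ∃ a : ℕ → ℝ, (∀ ν ≤ n, 0 ≤ a ν) ∧
      p = ∑ ν ∈ Finset.range (n + 1), C (a ν) * bernsteinPolynomial ℝ n ν := by
  constructor
  · intro hp
    obtain ⟨c, rfl⟩ := (Submodule.mem_span_range_iff_exists_fun _).mp hp
    refine ⟨fun ν => if h : ν < n + 1 then (c ⟨ν, h⟩ : ℝ) else 0, fun ν _ => ?_, ?_⟩
    · dsimp only
      split_ifs
      exacts [(c _).2, le_rfl]
    · rw [← Fin.sum_univ_eq_sum_range]
      refine Finset.sum_congr rfl fun ν _ => ?_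
      simp only [ν.is_lt, dif_pos, Fin.eta, ← Nonneg.coe_smul, smul_eq_C_mul]
  · rintro ⟨a, ha, rfl⟩
    refine Submodule.sum_mem _ fun ν hν => ?_
    have hν : ν ≤ n := Nat.lt_succ_iff.mp (Finset.mem_range.mp hν)
    rw [← smul_eq_C_mul]
    exact PointedCone.smul_mem _ (ha ν hν) (bernsteinPolynomial_mem hν)

theorem map_mem {m n : ℕ} (f : ℝ[X] →ₗ[ℝ] ℝ[X])
    (hf : ∀ ν ≤ m, f (bernsteinPolynomial ℝ m ν) ∈ bernsteinCone n) {p : ℝ[X]}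
    (hp : p ∈ bernsteinCone m) : f p ∈ bernsteinCone n := by
  refine (Submodule.map_span_le (f : ℝ[X] →ₗ[{c : ℝ // 0 ≤ c}] ℝ[X]) _ _).mpr ?_ ⟨p, hp, rfl⟩
  rintro _ ⟨ν, rfl⟩
  exact hf ν (Nat.lt_succ_iff.mp ν.2)

theorem one_mem : (1 : ℝ[X]) ∈ bernsteinCone 0 := by
  simpa [bernsteinPolynomial] using bernsteinPolynomial_mem (n := 0) le_rfl

theorem C_mem {r : ℝ} (hr : 0 ≤ r) : C r ∈ bernsteinCone 0 := by
  rw [← mul_one (C r), ← smul_eq_C_mul]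
  exact PointedCone.smul_mem _ hr one_mem

theorem mul_mem_succ {n : ℕ} {a b : ℝ} (ha : 0 ≤ a) (hb : 0 ≤ b) {p : ℝ[X]}
    (hp : p ∈ bernsteinCone n) : (C a * X + C b * (1 - X)) * p ∈ bernsteinCone (n + 1) := by
  refine map_mem (LinearMap.mulLeft ℝ (C a * X + C b * (1 - X))) (fun ν hν => ?_) hp
  rw [LinearMap.mulLeft_apply,
    ← (bernsteinCone (n + 1)).smul_mem_iff (by positivity : (0 : ℝ) < n + 1)]
  have hsplit : ((n : ℝ) + 1) • ((C a * X + C b * (1 - X)) * bernsteinPolynomial ℝ n ν)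
      = (a * (ν + 1 : ℕ)) • bernsteinPolynomial ℝ (n + 1) (ν + 1)
        + (b * (n + 1 - ν : ℕ)) • bernsteinPolynomial ℝ (n + 1) ν := by
    have hX := bernsteinPolynomial.X_mul (R := ℝ) n ν
    have h1X := bernsteinPolynomial.one_sub_X_mul (R := ℝ) hν
    simp only [smul_eq_C_mul, C_mul, C_add, C_1, map_natCast] at hX h1X ⊢
    push_cast at hX h1X ⊢
    linear_combination C a * hX + C b * h1X
  rw [hsplit]
  exact add_mem (PointedCone.smul_mem _ (by positivity) (bernsteinPolynomial_mem (by omega)))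
    (PointedCone.smul_mem _ (by positivity) (bernsteinPolynomial_mem (by omega)))

theorem pow_mul_mem {n : ℕ} {a b : ℝ} (ha : 0 ≤ a) (hb : 0 ≤ b) {p : ℝ[X]}
    (hp : p ∈ bernsteinCone n) (k : ℕ) :
    (C a * X + C b * (1 - X)) ^ k * p ∈ bernsteinCone (n + k) := by
  induction k with
  | zero => simpa using hp
  | succ k ih => simpa only [pow_succ', mul_assoc, ← add_assoc] using mul_mem_succ ha hb ih

theorem comp_mem {n : ℕ} {c e : ℝ} (hc : 0 ≤ c) (hce : c ≤ e) (he : e ≤ 1) {p : ℝ[X]}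
    (hp : p ∈ bernsteinCone n) : p.comp (C c + C (e - c) * X) ∈ bernsteinCone n := by
  refine map_mem (aeval (C c + C (e - c) * X)).toLinearMap (fun ν hν => ?_) hp
  have hu : C c + C (e - c) * X = C e * X + C c * (1 - X) := by
    simp only [C_sub]
    ring
  have hv : 1 - (C c + C (e - c) * X) = C (1 - e) * X + C (1 - c) * (1 - X) := by
    simp only [C_sub, C_1]
    ring
  have hcomp : aeval (C c + C (e - c) * X) (bernsteinPolynomial ℝ n ν)
      = (C (1 - e) * X + C (1 - c) * (1 - X)) ^ (n - ν)
          * ((C e * X + C c * (1 - X)) ^ ν * C (n.choose ν : ℝ)) := by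
    rw [← hu, ← hv, ← comp_eq_aeval]
    simp only [bernsteinPolynomial, mul_comp, pow_comp, sub_comp, one_comp, X_comp, C_comp,
      ← C_eq_natCast]
    ring
  rw [AlgHom.toLinearMap_apply, hcomp]
  have hpow := pow_mul_mem (a := 1 - e) (b := 1 - c) (by linarith) (by linarith)
    (pow_mul_mem (hc.trans hce) hc (C_mem (Nat.cast_nonneg (n.choose ν))) ν) (n - ν)
  rwa [show 0 + ν + (n - ν) = n by omega] at hpow

end bernsteinCone

section BernsteinCoeffComp

variable {n : ℕ} {a a' : ℕ → ℝ} {c e : ℝ}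

theorem bernsteinCoeff_comp_nonneg (hc : 0 ≤ c) (hce : c ≤ e) (he : e ≤ 1)
    (ha : ∀ ν ≤ n, 0 ≤ a ν)
    (h : (∑ ν ∈ Finset.range (n + 1), C (a ν) * bernsteinPolynomial ℝ n ν).comp
        (C c + C (e - c) * X)
      = ∑ ν ∈ Finset.range (n + 1), C (a' ν) * bernsteinPolynomial ℝ n ν) :
    ∀ ν ≤ n, 0 ≤ a' ν := by
  have hmem := bernsteinCone.comp_mem hc hce he (bernsteinCone.mem_iff.mpr ⟨a, ha, rfl⟩)
  obtain ⟨a'', ha'', heq⟩ := bernsteinCone.mem_iff.mp (h ▸ hmem)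
  intro ν hν
  rw [bernsteinPolynomial.sum_C_mul_inj heq ν hν]
  exact ha'' ν hν

theorem le_bernsteinCoeff_comp {r : ℝ} (hc : 0 ≤ c) (hce : c ≤ e) (he : e ≤ 1)
    (hr : ∀ ν ≤ n, r ≤ a ν)
    (h : (∑ ν ∈ Finset.range (n + 1), C (a ν) * bernsteinPolynomial ℝ n ν).comp
        (C c + C (e - c) * X)
      = ∑ ν ∈ Finset.range (n + 1), C (a' ν) * bernsteinPolynomial ℝ n ν) :
    ∀ ν ≤ n, r ≤ a' ν := by
  refine fun ν hν => sub_nonneg.mp (bernsteinCoeff_comp_nonneg (a := fun i => a i - r)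
    (a' := fun i => a' i - r) hc hce he (fun i hi => sub_nonneg.mpr (hr i hi)) ?_ ν hν)
  rw [bernsteinPolynomial.sum_C_sub_mul, bernsteinPolynomial.sum_C_sub_mul, sub_comp, C_comp, h]

theorem bernsteinCoeff_comp_le {r : ℝ} (hc : 0 ≤ c) (hce : c ≤ e) (he : e ≤ 1)
    (hr : ∀ ν ≤ n, a ν ≤ r)
    (h : (∑ ν ∈ Finset.range (n + 1), C (a ν) * bernsteinPolynomial ℝ n ν).comp
        (C c + C (e - c) * X)
      = ∑ ν ∈ Finset.range (n + 1), C (a' ν) * bernsteinPolynomial ℝ n ν) :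
    ∀ ν ≤ n, a' ν ≤ r := by
  refine fun ν hν => neg_le_neg_iff.mp (le_bernsteinCoeff_comp (a := -a) (a' := -a') hc hce he
    (fun i hi => neg_le_neg (hr i hi)) ?_ ν hν)
  simp only [Pi.neg_apply, C_neg, neg_mul, Finset.sum_neg_distrib, neg_comp, h]

end BernsteinCoeffComp

theorem stmt_9_general (M : ℕ) (P : Polynomial ℝ)
    (b b' : ℕ → ℝ) (c e : ℝ) (hc : 0 ≤ c) (hce : c < e) (he : e ≤ 1)
    (hPb : P = ∑ j ∈ Finset.range (M + 1), C (b j) * bernsteinPolynomial ℝ M j)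
    (hQb : P.comp (C c + C (e - c) * X)
      = ∑ j ∈ Finset.range (M + 1), C (b' j) * bernsteinPolynomial ℝ M j) :
    ∀ j ≤ M,
      (Finset.range (M + 1)).inf' (Finset.nonempty_range_iff.mpr (Nat.succ_ne_zero M)) b
        ≤ b' j ∧
      b' j ≤ (Finset.range (M + 1)).sup'
        (Finset.nonempty_range_iff.mpr (Nat.succ_ne_zero M)) b := by
  rw [hPb] at hQb
  have hmem : ∀ i ≤ M, i ∈ Finset.range (M + 1) := fun i hi => Finset.mem_range.mpr (by omega)
  exact fun j hj =>
    ⟨le_bernsteinCoeff_comp hc hce.le he (fun i hi => Finset.inf'_le b (hmem i hi)) hQb j hj,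
      bernsteinCoeff_comp_le hc hce.le he (fun i hi => Finset.le_sup' b (hmem i hi)) hQb j hj⟩

/-- Subdivision property of Bernstein coefficients: if `P` (of degree at most `M`) has
Bernstein coefficients `b` on `[0,1]` and `b'` on a subinterval `[c,e] ⊆ [0,1]`
(i.e. `b'` are the Bernstein coefficients of `Q(t) = P(c + (e−c)t)`), then every `b'ⱼ`
lies between the min and the max of the `bᵢ`. -/
theorem stmt_9 (M : ℕ) (P : Polynomial ℝ) (hP : P.natDegree ≤ M)
    (b b' : ℕ → ℝ) (c e : ℝ) (hc : 0 ≤ c) (hce : c < e) (he : e ≤ 1)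
    (hPb : P = ∑ j ∈ Finset.range (M + 1), C (b j) * bernsteinPolynomial ℝ M j)
    (hQb : P.comp (C c + C (e - c) * X)
      = ∑ j ∈ Finset.range (M + 1), C (b' j) * bernsteinPolynomial ℝ M j) :
    ∀ j ≤ M,
      (Finset.range (M + 1)).inf' (Finset.nonempty_range_iff.mpr (Nat.succ_ne_zero M)) b
        ≤ b' j ∧
      b' j ≤ (Finset.range (M + 1)).sup'
        (Finset.nonempty_range_iff.mpr (Nat.succ_ne_zero M)) b :=
  stmt_9_general M P b b' c e hc hce he hPb hQb
end

section
/- For every natural number k ≥ 1, the polynomial d^k/dx^k[(x² − 1)^k] (the k-fold derivative of (X² − 1)^k, which is the Legendre polynomial of degree k up to the positive factor 2^k k!) has k distinct real roots, all lying in the open interval (−1, 1). -/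
/-!
Let `q_j` be the `j`-th derivative of `(X² - 1)^k`. For `j < k`, `q_j` is divisible by
`(X² - 1)^(k - j)`, so it vanishes at `±1`. If `q_j` has `j` distinct roots in `(-1, 1)`, then
together with `±1` these are `j + 2` roots in `[-1, 1]`, and Rolle's theorem between consecutive
ones yields `j + 1` distinct roots of `q_{j+1}` in `(-1, 1)`. Starting from `j = 0` this gives
`k` roots of `q_k` in `(-1, 1)`.
-/

open Polynomial Set

namespace Polynomial

theorem iterate_derivative_ne_zero {R : Type*} [Semiring R] [NoZeroDivisors R] [CharZero R]
    {p : R[X]} (hp : p ≠ 0) {k : ℕ} (hk : k ≤ p.natDegree) : derivative^[k] p ≠ 0 := by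
  intro h
  have hcoeff := coeff_iterate_derivative (k := k) p (p.natDegree - k)
  rw [h, coeff_zero, Nat.sub_add_cancel hk, nsmul_eq_mul] at hcoeff
  exact mul_ne_zero (Nat.cast_ne_zero.2 (Nat.descFactorial_pos.2 hk).ne')
    (leadingCoeff_ne_zero.2 hp) hcoeff.symm

theorem exists_finset_roots_derivative_Ioo {p : ℝ[X]} (hp : derivative p ≠ 0) {a b : ℝ}
    {s : Finset ℝ} (hs : ∀ x ∈ s, x ∈ Icc a b ∧ p.IsRoot x) :
    ∃ t : Finset ℝ, s.card ≤ t.card + 1 ∧ ∀ x ∈ t, x ∈ Ioo a b ∧ (derivative p).IsRoot x := by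
  classical
  set t := (derivative p).roots.toFinset.filter (· ∈ Ioo a b)
  refine ⟨t, ?_, fun x hx => ?_⟩
  · have hinterleaved : s.card ≤ (t \ s).card + 1 := by
      refine Finset.card_le_sdiff_of_interleaved fun x hx y hy hxy _ => ?_
      obtain ⟨z, hz, hderiv⟩ := exists_deriv_eq_zero hxy p.continuousOn
        ((hs x hx).2.trans (hs y hy).2.symm)
      refine ⟨z, Finset.mem_filter.2 ⟨?_, (hs x hx).1.1.trans_lt hz.1,
        hz.2.trans_le (hs y hy).1.2⟩, hz⟩
      rwa [Multiset.mem_toFinset, mem_roots hp, IsRoot, ← p.deriv]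
    exact hinterleaved.trans (Nat.add_le_add_right (Finset.card_le_card Finset.sdiff_subset) 1)
  · rw [Finset.mem_filter, Multiset.mem_toFinset, mem_roots hp] at hx
    exact hx.symm

theorem exists_finset_roots_derivative_Ioo_of_isRoot {p : ℝ[X]} (hp : derivative p ≠ 0)
    {a b : ℝ} (hab : a < b) (ha : p.IsRoot a) (hb : p.IsRoot b) {s : Finset ℝ}
    (hs : ∀ x ∈ s, x ∈ Ioo a b ∧ p.IsRoot x) :
    ∃ t : Finset ℝ, s.card + 1 ≤ t.card ∧ ∀ x ∈ t, x ∈ Ioo a b ∧ (derivative p).IsRoot x := by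
  have hb_notMem : b ∉ s := fun h => (hs b h).1.2.false
  have ha_notMem : a ∉ insert b s := by
    simp only [Finset.mem_insert, not_or]
    exact ⟨hab.ne, fun h => (hs a h).1.1.false⟩
  obtain ⟨t, hcard, ht⟩ := exists_finset_roots_derivative_Ioo hp (s := insert a (insert b s))
    (by
      simp only [Finset.mem_insert, forall_eq_or_imp]
      exact ⟨⟨left_mem_Icc.2 hab.le, ha⟩, ⟨right_mem_Icc.2 hab.le, hb⟩,
        fun x hx => ⟨Ioo_subset_Icc_self (hs x hx).1, (hs x hx).2⟩⟩)
  rw [Finset.card_insert_of_notMem ha_notMem, Finset.card_insert_of_notMem hb_notMem] at hcard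
  exact ⟨t, by omega, ht⟩

theorem isRoot_iterate_derivative_X_sq_sub_one_pow {R : Type*} [CommRing R] {j k : ℕ}
    (hjk : j < k) {x : R} (hx : x ^ 2 = 1) :
    (derivative^[j] ((X ^ 2 - 1) ^ k : R[X])).IsRoot x := by
  obtain ⟨r, hr⟩ := pow_sub_dvd_iterate_derivative_pow (X ^ 2 - 1 : R[X]) k j
  simp [IsRoot, hr, hx, Nat.sub_ne_zero_of_lt hjk]

theorem natDegree_X_sq_sub_one_pow (k : ℕ) : ((X ^ 2 - 1) ^ k : ℝ[X]).natDegree = 2 * k := by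
  rw [natDegree_pow, ← C_1, natDegree_X_pow_sub_C, mul_comm]

theorem exists_finset_roots_iterate_derivative_X_sq_sub_one_pow {j k : ℕ} (hjk : j ≤ k) :
    ∃ s : Finset ℝ, j ≤ s.card ∧
      ∀ x ∈ s, x ∈ Ioo (-1) 1 ∧ (derivative^[j] ((X ^ 2 - 1) ^ k : ℝ[X])).IsRoot x := by
  induction j with
  | zero => exact ⟨∅, le_rfl, by simp⟩
  | succ j ih =>
    obtain ⟨s, hcard, hs⟩ := ih (Nat.le_of_succ_le hjk)
    have hderiv : derivative (derivative^[j] ((X ^ 2 - 1) ^ k : ℝ[X])) ≠ 0 := by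
      rw [← Function.iterate_succ_apply' derivative]
      have hdeg := natDegree_X_sq_sub_one_pow k
      exact iterate_derivative_ne_zero (ne_zero_of_natDegree_gt (n := 0) (by omega)) (by omega)
    obtain ⟨t, htcard, ht⟩ := exists_finset_roots_derivative_Ioo_of_isRoot hderiv
      (by norm_num) (isRoot_iterate_derivative_X_sq_sub_one_pow hjk (by norm_num))
      (isRoot_iterate_derivative_X_sq_sub_one_pow hjk (by norm_num)) hs
    refine ⟨t, by omega, fun x hx => ?_⟩
    rw [Function.iterate_succ_apply']
    exact ht x hx

end Polynomial

theorem stmt_15_general (k : ℕ) :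
    ∃ s : Finset ℝ, s.card = k ∧ ∀ x ∈ s, x ∈ Set.Ioo (-1 : ℝ) 1 ∧
      eval x ((fun p : Polynomial ℝ => derivative p)^[k] ((X ^ 2 - 1) ^ k)) = 0 := by
  obtain ⟨s, hcard, hs⟩ := exists_finset_roots_iterate_derivative_X_sq_sub_one_pow (le_refl k)
  obtain ⟨t, hts, htcard⟩ := Finset.exists_subset_card_eq hcard
  exact ⟨t, htcard, fun x hx => hs x (hts hx)⟩

/-- For `k ≥ 1`, the `k`-fold derivative of `(X² − 1)^k` (the Legendre polynomial of
degree `k` up to the positive factor `2^k k!`) has `k` distinct real roots, all lying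
in the open interval `(−1, 1)`. -/
theorem stmt_15 (k : ℕ) (hk : 1 ≤ k) :
    ∃ s : Finset ℝ, s.card = k ∧ ∀ x ∈ s, x ∈ Set.Ioo (-1 : ℝ) 1 ∧
      eval x ((fun p : Polynomial ℝ => derivative p)^[k] ((X ^ 2 - 1) ^ k)) = 0 :=
  stmt_15_general k
end

section
/- Let h : ℝ → ℝ be twice differentiable and let λ₁, λ₂ ≥ 0. Suppose h''(t) + (λ₁ + λ₂)·h'(t) + λ₁·λ₂·h(t) ≥ 0 for every t ≥ 0, h(0) ≥ 0, and h'(0) + λ₂·h(0) ≥ 0. Then h(t) ≥ 0 for every t ≥ 0. -/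
/-!
The operator `D² + (λ₁ + λ₂) D + λ₁ λ₂` factors as `(D + λ₁)(D + λ₂)`, so it suffices to show
that `f' + λ f ≥ 0` and `f 0 ≥ 0` force `f ≥ 0`; this holds because `t ↦ exp (λ t) f t` has
derivative `exp (λ t) (f' t + λ f t) ≥ 0`. Apply it first to `g = h' + λ₂ h`, then to `h`.
-/

open Real Set

theorem hasDerivAt_exp_mul_mul {f : ℝ → ℝ} {f' : ℝ} (l x : ℝ) (hf : HasDerivAt f f' x) :
    HasDerivAt (fun t => exp (l * t) * f t) (exp (l * x) * (f' + l * f x)) x := by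
  have hexp : HasDerivAt (fun t => exp (l * t)) (exp (l * x) * l) x :=
    ((hasDerivAt_id x).const_mul l).exp.congr_deriv (by simp)
  exact (hexp.mul hf).congr_deriv (by ring)

theorem nonneg_of_deriv_add_mul_nonneg {f : ℝ → ℝ} {l a : ℝ} (hf : Differentiable ℝ f)
    (hineq : ∀ t ≥ a, 0 ≤ deriv f t + l * f t) (ha : 0 ≤ f a) :
    ∀ t ≥ a, 0 ≤ f t := by
  intro t ht
  have hderiv (x : ℝ) := hasDerivAt_exp_mul_mul l x (hf x).hasDerivAt
  have hmono : MonotoneOn (fun t => exp (l * t) * f t) (Ici a) := by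
    refine monotoneOn_of_hasDerivWithinAt_nonneg (convex_Ici a)
      (fun x _ => (hderiv x).continuousAt.continuousWithinAt)
      (fun x _ => (hderiv x).hasDerivWithinAt) fun x hx => ?_
    rw [interior_Ici] at hx
    exact mul_nonneg (exp_pos _).le (hineq x hx.le)
  have : exp (l * a) * f a ≤ exp (l * t) * f t := hmono self_mem_Ici ht ht
  exact nonneg_of_mul_nonneg_right (mul_nonneg (exp_pos _).le ha |>.trans this) (exp_pos _)

theorem stmt_19_general (h : ℝ → ℝ) (hd1 : Differentiable ℝ h)
    (hd2 : Differentiable ℝ (deriv h)) (l1 l2 : ℝ)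
    (hineq : ∀ t ≥ (0 : ℝ),
      deriv (deriv h) t + (l1 + l2) * deriv h t + l1 * l2 * h t ≥ 0)
    (h0 : h 0 ≥ 0) (h0' : deriv h 0 + l2 * h 0 ≥ 0) :
    ∀ t ≥ (0 : ℝ), h t ≥ 0 := by
  set g : ℝ → ℝ := fun t => deriv h t + l2 * h t
  have hg (x : ℝ) : HasDerivAt g (deriv (deriv h) x + l2 * deriv h x) x :=
    (hd2 x).hasDerivAt.add ((hd1 x).hasDerivAt.const_mul l2)
  have hg_nonneg : ∀ t ≥ (0 : ℝ), 0 ≤ g t := by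
    refine nonneg_of_deriv_add_mul_nonneg (l := l1) (fun x => (hg x).differentiableAt)
      (fun t ht => ?_) h0'
    rw [(hg t).deriv]
    linarith [hineq t ht]
  exact nonneg_of_deriv_add_mul_nonneg hd1 hg_nonneg h0

/-- Second-order exponential control barrier function condition (paper's equations
(11) and (22)): if `h'' + (λ₁+λ₂)h' + λ₁λ₂h ≥ 0` on `t ≥ 0` with `λ₁, λ₂ ≥ 0`,
`h(0) ≥ 0` and `h'(0) + λ₂h(0) ≥ 0`, then `h(t) ≥ 0` for all `t ≥ 0`. -/
theorem stmt_19 (h : ℝ → ℝ) (hd1 : Differentiable ℝ h)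
    (hd2 : Differentiable ℝ (deriv h)) (l1 l2 : ℝ) (hl1 : 0 ≤ l1) (hl2 : 0 ≤ l2)
    (hineq : ∀ t ≥ (0 : ℝ),
      deriv (deriv h) t + (l1 + l2) * deriv h t + l1 * l2 * h t ≥ 0)
    (h0 : h 0 ≥ 0) (h0' : deriv h 0 + l2 * h 0 ≥ 0) :
    ∀ t ≥ (0 : ℝ), h t ≥ 0 :=
  stmt_19_general h hd1 hd2 l1 l2 hineq h0 h0'
end
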